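/- Let F be a k-CNF. If F has a tree-like Res(l) refutation with L leaves, then F has a Resolution refutation of width at most l·⌈log₂ L⌉ + max{k, l}. -/

import Mathlib

/-!
Let `w = l·⌈log₂ L⌉ + max k l` and suppose the empty clause has no resolution derivation of
width `w`. Call a consistent set of literals safe if it falsifies no clause derivable in width
`w`. The empty set is safe, and a safe set with at most `w` literals extends safely by `m` or
by `¬m`: otherwise the two clauses witnessing this resolve on `m` to a clause that the set
falsifies, whose width is therefore at most `w`.

By induction on the tree, every line with at most `2^b` leaves above it has a term that can be
added safely to any safe `α` with `|α| + l·b + max k l ≤ w`: a leaf, whether a clause of `F` or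
an axiom, is handled by extending `α` literal by literal, and a cut by first descending into the
subtree with fewer leaves. At the root, whose line is the empty DNF, this is absurd.
-/

/-- Propositional variables. -/
abbrev PVar := ℕ

/-- A literal: a variable together with a sign (`true` = the positive literal `x`,
`false` = the negated literal `¬x`). -/
abbrev PLit := PVar × Bool

/-- Negation of a literal. -/
def PLit.neg (m : PLit) : PLit := (m.1, !m.2)

/-- A clause: a finite set of literals, read as their disjunction.
Its width is its cardinality. -/
abbrev PClause := Finset PLit

/-- A CNF formula: a finite set of clauses, read as their conjunction. -/
abbrev PCnf := Finset PClause

/-- A term: a finite set of literals, read as their conjunction. -/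
abbrev PTerm := Finset PLit

/-- A DNF: a finite set of terms, read as their disjunction. -/
abbrev PDnf := Finset PTerm

/-- `D` is an `l`-DNF: every term of `D` has at most `l` literals. -/
def IsLDnf (l : ℕ) (D : PDnf) : Prop := ∀ T ∈ D, T.card ≤ l

/-- The negation `¬C` of a clause `C = m₁ ∨ … ∨ m_t`, i.e. the term `¬m₁ ∧ … ∧ ¬m_t`. -/
def PClause.negTerm (C : PClause) : PTerm := C.image PLit.neg

/-- A clause viewed as a DNF consisting of singleton terms. -/
def PClause.toDnf (C : PClause) : PDnf := C.image (fun m => ({m} : PTerm))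

/-- The disjunction `¬l₁ ∨ … ∨ ¬l_s` of the negations of the literals of the
term `T = l₁ ∧ … ∧ l_s`, as a DNF of singleton terms. -/
def PTerm.negLits (T : PTerm) : PDnf := T.image (fun m => ({m.neg} : PTerm))

/-- Binary proof trees whose nodes are labelled by DNFs. -/
inductive PTree : Type where
  | leaf (D : PDnf) : PTree
  | node (D : PDnf) (t₁ t₂ : PTree) : PTree

namespace PTree

/-- The label at the root of the tree. -/
def concl : PTree → PDnf
  | .leaf D => D
  | .node D _ _ => D

/-- The number of leaves of the tree. -/
def leaves : PTree → ℕ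
  | .leaf _ => 1
  | .node _ t₁ t₂ => t₁.leaves + t₂.leaves

/-- The total number of nodes (proof lines) of the tree. -/
def size : PTree → ℕ
  | .leaf _ => 1
  | .node _ t₁ t₂ => t₁.size + t₂.size + 1

/-- The list of all labels occurring in the tree. -/
def labels : PTree → List PDnf
  | .leaf D => [D]
  | .node D t₁ t₂ => D :: (t₁.labels ++ t₂.labels)

/-- Structural validity of a tree-like Res derivation from the set `H` of
hypothesis DNFs: every leaf is a hypothesis or an axiom
`(l₁∧…∧l_s) ∨ ¬l₁ ∨ … ∨ ¬l_s` (with `s ≥ 1`), and every internal node with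
children `A ∨ (l₁∧…∧l_s)` and `B ∨ ¬l₁ ∨ … ∨ ¬l_s` is labelled by the
cut `A ∨ B`. -/
def okStruct (H : Finset PDnf) : PTree → Prop
  | .leaf D => D ∈ H ∨ ∃ T : PTerm, T.Nonempty ∧ D = insert T T.negLits
  | .node D t₁ t₂ => t₁.okStruct H ∧ t₂.okStruct H ∧
      ∃ (T : PTerm) (A B : PDnf), T.Nonempty ∧
        t₁.concl = insert T A ∧ t₂.concl = B ∪ T.negLits ∧ D = A ∪ B

/-- A valid tree-like Res(l) derivation from the hypotheses `H`: it is
structurally valid and every proof line is an `l`-DNF. -/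
def valid (H : Finset PDnf) (l : ℕ) (t : PTree) : Prop :=
  t.okStruct H ∧ ∀ D ∈ t.labels, IsLDnf l D

/-- The number of leaves labelled by an axiom rather than by a hypothesis. -/
def axLeafCount (H : Finset PDnf) : PTree → ℕ
  | .leaf D => if D ∈ H then 0 else 1
  | .node _ t₁ t₂ => t₁.axLeafCount H + t₂.axLeafCount H

end PTree

/-- The set of hypothesis DNFs associated to a CNF: each clause read as a DNF
of singleton terms. -/
def PCnf.toHyps (F : PCnf) : Finset PDnf := F.image PClause.toDnf

/-- `t` is a tree-like Res(l) refutation of the CNF `F`: a valid tree-like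
Res(l) derivation from the clauses of `F` whose root is the empty DNF. -/
def TreeResRefutation (F : PCnf) (l : ℕ) (t : PTree) : Prop :=
  t.valid F.toHyps l ∧ t.concl = ∅

/-- Resolution inference: the clause `C` is obtained from two clauses
`A ∨ x` and `B ∨ ¬x` occurring in `prev` by the resolution rule, yielding `A ∨ B`. -/
def ResStep (prev : List PClause) (C : PClause) : Prop :=
  ∃ A ∈ prev, ∃ B ∈ prev, ∃ x : PVar,
    (x, true) ∈ A ∧ (x, false) ∈ B ∧
    C = A.erase (x, true) ∪ B.erase (x, false)

/-- `π` is a resolution derivation from the CNF `F`: every clause of `π`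
belongs to `F` or follows from two earlier clauses by the resolution rule. -/
def IsResDeriv (F : PCnf) (π : List PClause) : Prop :=
  ∀ i : Fin π.length, π.get i ∈ F ∨ ResStep (π.take i) (π.get i)

/-- `π` is a resolution derivation of the clause `C` from the CNF `F`
(its last clause is `C`); a refutation when `C = ∅`. Its size is `π.length`
and its width is the maximum cardinality of a clause in `π`. -/
def ResDerivOf (F : PCnf) (C : PClause) (π : List PClause) : Prop :=
  IsResDeriv F π ∧ π.getLast? = some C

/-- A partial assignment: maps some variables to truth values. -/
abbrev PAssign := PVar → Option Bool

/-- The restriction `F|ρ`: delete every clause containing a literal satisfied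
by `ρ`, and delete from the remaining clauses every literal falsified by `ρ`. -/
def PCnf.restrict (F : PCnf) (ρ : PAssign) : PCnf :=
  (F.filter (fun C => ∀ m ∈ C, ρ m.1 ≠ some m.2)).image
    (fun C => C.filter (fun m => ρ m.1 ≠ some (!m.2)))

@[simp] lemma PLit.neg_neg (m : PLit) : m.neg.neg = m := by
  simp [PLit.neg]

lemma PLit.neg_injective : Function.Injective PLit.neg :=
  Function.LeftInverse.injective PLit.neg_neg

lemma PLit.neg_ne (m : PLit) : m.neg ≠ m := by
  simp [PLit.neg, Prod.ext_iff]

lemma PClause.card_negTerm (C : PClause) : C.negTerm.card = C.card :=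
  Finset.card_image_of_injective _ PLit.neg_injective

lemma PTree.concl_mem_labels (u : PTree) : u.concl ∈ u.labels := by
  cases u <;> simp [PTree.concl, PTree.labels]

lemma PTree.one_le_leaves (u : PTree) : 1 ≤ u.leaves := by
  induction u with
  | leaf => rfl
  | node _ _ _ ih₁ _ => simp only [PTree.leaves]; omega

lemma PTree.valid.left {H : Finset PDnf} {l : ℕ} {D : PDnf} {t₁ t₂ : PTree}
    (h : (PTree.node D t₁ t₂).valid H l) : t₁.valid H l :=
  ⟨h.1.1, fun D' hD' => h.2 D' (by simp [PTree.labels, hD'])⟩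

lemma PTree.valid.right {H : Finset PDnf} {l : ℕ} {D : PDnf} {t₁ t₂ : PTree}
    (h : (PTree.node D t₁ t₂).valid H l) : t₂.valid H l :=
  ⟨h.1.2.1, fun D' hD' => h.2 D' (by simp [PTree.labels, hD'])⟩

lemma ResStep.mono {p q : List PClause} {C : PClause} (h : ResStep p C) (hpq : p ⊆ q) :
    ResStep q C := by
  obtain ⟨A, hA, B, hB, x, hxA, hxB, rfl⟩ := h
  exact ⟨A, hpq hA, B, hpq hB, x, hxA, hxB, rfl⟩

section Derivations

variable {F : PCnf}

lemma IsResDeriv.append {π₁ π₂ : List PClause} (h₁ : IsResDeriv F π₁)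
    (h₂ : ∀ i : Fin π₂.length, π₂.get i ∈ F ∨ ResStep (π₁ ++ π₂.take i) (π₂.get i)) :
    IsResDeriv F (π₁ ++ π₂) := by
  rintro ⟨i, hi⟩
  rcases lt_or_ge i π₁.length with h | h
  · simpa [List.getElem_append_left h, List.take_append_of_le_length h.le] using h₁ ⟨i, h⟩
  · obtain ⟨j, rfl⟩ := Nat.exists_eq_add_of_le h
    simp only [List.length_append] at hi
    simpa [List.take_length_add_append] using h₂ ⟨j, by omega⟩

lemma IsResDeriv.append_isResDeriv {π₁ π₂ : List PClause} (h₁ : IsResDeriv F π₁)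
    (h₂ : IsResDeriv F π₂) : IsResDeriv F (π₁ ++ π₂) :=
  h₁.append fun i => (h₂ i).imp_right fun h => h.mono (List.subset_append_right _ _)

lemma IsResDeriv.concat {π : List PClause} {C : PClause} (h : IsResDeriv F π)
    (hC : ResStep π C) : IsResDeriv F (π ++ [C]) :=
  h.append fun _ => Or.inr (by simpa using hC)

lemma isResDeriv_singleton {C : PClause} (hC : C ∈ F) : IsResDeriv F [C] := by
  rintro ⟨i, hi⟩
  obtain rfl : i = 0 := by simpa using hi
  exact Or.inl hC

inductive DerivableInWidth (F : PCnf) (w : ℕ) : PClause → Prop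
  | ax {C : PClause} (hC : C ∈ F) (hw : C.card ≤ w) : DerivableInWidth F w C
  | res {A B : PClause} (x : PVar) (hA : DerivableInWidth F w A) (hB : DerivableInWidth F w B)
      (hxA : (x, true) ∈ A) (hxB : (x, false) ∈ B)
      (hw : (A.erase (x, true) ∪ B.erase (x, false)).card ≤ w) :
      DerivableInWidth F w (A.erase (x, true) ∪ B.erase (x, false))

variable {w : ℕ}

lemma DerivableInWidth.exists_resDerivOf {C : PClause} (h : DerivableInWidth F w C) :
    ∃ π : List PClause, ResDerivOf F C π ∧ ∀ D ∈ π, D.card ≤ w := by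
  induction h with
  | @ax C hC hw => exact ⟨[C], ⟨isResDeriv_singleton hC, rfl⟩, by simpa using hw⟩
  | @res A B x _ _ hxA hxB hw ihA ihB =>
    obtain ⟨π₁, ⟨h₁, hl₁⟩, hw₁⟩ := ihA
    obtain ⟨π₂, ⟨h₂, hl₂⟩, hw₂⟩ := ihB
    have hstep : ResStep (π₁ ++ π₂) (A.erase (x, true) ∪ B.erase (x, false)) :=
      ⟨A, List.mem_append_left _ (List.mem_of_getLast? hl₁),
        B, List.mem_append_right _ (List.mem_of_getLast? hl₂), x, hxA, hxB, rfl⟩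
    refine ⟨π₁ ++ π₂ ++ [_], ⟨(h₁.append_isResDeriv h₂).concat hstep, List.getLast?_concat⟩, ?_⟩
    simp only [List.mem_append, List.mem_singleton]
    rintro D ((hD | hD) | rfl)
    exacts [hw₁ D hD, hw₂ D hD, hw]

lemma DerivableInWidth.resolve {C₀ C₁ : PClause} (h₀ : DerivableInWidth F w C₀)
    (h₁ : DerivableInWidth F w C₁) {m : PLit} (hm₀ : m ∈ C₀) (hm₁ : m.neg ∈ C₁)
    (hw : (C₀.erase m ∪ C₁.erase m.neg).card ≤ w) :
    DerivableInWidth F w (C₀.erase m ∪ C₁.erase m.neg) := by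
  obtain ⟨x, _ | _⟩ := m
  · rw [Finset.union_comm] at hw ⊢
    exact .res x h₁ h₀ hm₁ hm₀ hw
  · exact .res x h₀ h₁ hm₀ hm₁ hw

end Derivations

section Safe

open Finset

variable {F : PCnf} {w : ℕ}

lemma PClause.negTerm_subset_iff {C : PClause} {α : PTerm} :
    C.negTerm ⊆ α ↔ ∀ m ∈ C, m.neg ∈ α :=
  image_subset_iff

def IsConsistent (α : PTerm) : Prop := ∀ m ∈ α, m.neg ∉ α

/-- The Atserias–Dalmau family. A consistent term `α` is read as the partial assignment making
it true, so `C.negTerm ⊆ α` says that `α` falsifies `C`. -/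
def IsSafe (F : PCnf) (w : ℕ) (α : PTerm) : Prop :=
  IsConsistent α ∧ ∀ C, DerivableInWidth F w C → ¬ C.negTerm ⊆ α

def HasSafeTerm (F : PCnf) (w : ℕ) (α : PTerm) (D : PDnf) : Prop :=
  ∃ T ∈ D, IsSafe F w (α ∪ T)

lemma IsSafe.mono {α β : PTerm} (h : IsSafe F w β) (hαβ : α ⊆ β) : IsSafe F w α :=
  ⟨fun m hm hneg => h.1 m (hαβ hm) (hαβ hneg), fun C hC hCα => h.2 C hC (hCα.trans hαβ)⟩

lemma IsSafe.neg_notMem {α : PTerm} {m : PLit} (h : IsSafe F w α) (hm : m ∈ α) : m.neg ∉ α :=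
  h.1 m hm

lemma isSafe_empty (h : ¬ DerivableInWidth F w ∅) : IsSafe F w ∅ := by
  refine ⟨fun m hm => absurd hm (notMem_empty m), fun C hC hCα => h ?_⟩
  rw [subset_empty, PClause.negTerm, image_eq_empty] at hCα
  exact hCα ▸ hC

lemma IsSafe.exists_of_not_isSafe_insert {α : PTerm} {m : PLit} (h : IsSafe F w α)
    (hm : m.neg ∉ α) (hn : ¬ IsSafe F w (insert m α)) :
    ∃ C, DerivableInWidth F w C ∧ m.neg ∈ C ∧ PClause.negTerm (C.erase m.neg) ⊆ α := by
  have hcons : IsConsistent (insert m α) := by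
    intro m' hm' hneg
    rcases mem_insert.mp hm' with rfl | hm'
    · rcases mem_insert.mp hneg with h' | h'
      exacts [m'.neg_ne h', hm h']
    · rcases mem_insert.mp hneg with h' | h'
      · exact hm (by rwa [← h', PLit.neg_neg])
      · exact h.neg_notMem hm' h'
  obtain ⟨C, hC, hCα⟩ : ∃ C, DerivableInWidth F w C ∧ C.negTerm ⊆ insert m α := by
    by_contra! hall
    exact hn ⟨hcons, hall⟩
  have herase : PClause.negTerm (C.erase m.neg) ⊆ α := by
    rw [PClause.negTerm_subset_iff] at hCα ⊢
    intro x hx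
    obtain ⟨hxm, hxC⟩ := mem_erase.mp hx
    rcases mem_insert.mp (hCα x hxC) with h' | h'
    · exact absurd (by rw [← h', PLit.neg_neg]) hxm
    · exact h'
  refine ⟨C, hC, ?_, herase⟩
  by_contra hmC
  exact h.2 C hC (by rwa [erase_eq_of_notMem hmC] at herase)

lemma IsSafe.insert_or_insert_neg {α : PTerm} (h : IsSafe F w α) (hw : α.card ≤ w) (m : PLit) :
    IsSafe F w (insert m α) ∨ IsSafe F w (insert m.neg α) := by
  by_cases hm : m ∈ α
  · exact Or.inl (by rwa [insert_eq_of_mem hm])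
  by_cases hmn : m.neg ∈ α
  · exact Or.inr (by rwa [insert_eq_of_mem hmn])
  by_contra! hboth
  obtain ⟨C₀, hC₀, hm₀, hα₀⟩ := h.exists_of_not_isSafe_insert hmn hboth.1
  obtain ⟨C₁, hC₁, hm₁, hα₁⟩ :=
    h.exists_of_not_isSafe_insert (by rwa [PLit.neg_neg]) hboth.2
  rw [PLit.neg_neg] at hm₁ hα₁
  have hR : PClause.negTerm (C₁.erase m ∪ C₀.erase m.neg) ⊆ α := by
    rw [PClause.negTerm, image_union]
    exact union_subset hα₁ hα₀
  have hRw : (C₁.erase m ∪ C₀.erase m.neg).card ≤ w := by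
    rw [← PClause.card_negTerm]
    exact (card_le_card hR).trans hw
  exact h.2 _ (hC₁.resolve hC₀ hm₁ hm₀ hRw) hR

lemma IsSafe.union_or_exists_insert_neg {α : PTerm} (h : IsSafe F w α) (T : PTerm)
    (hw : α.card + T.card ≤ w) :
    IsSafe F w (α ∪ T) ∨ ∃ m ∈ T, IsSafe F w (insert m.neg α) := by
  induction T using Finset.induction_on with
  | empty => exact Or.inl (by simpa using h)
  | insert m T _ ih =>
    have hT : T.card ≤ (insert m T).card := card_le_card (subset_insert m T)
    rcases ih (by omega) with hαT | ⟨m', hm', hsafe⟩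
    · have hαTw : (α ∪ T).card ≤ w := (card_union_le α T).trans (by omega)
      rcases hαT.insert_or_insert_neg hαTw m with h' | h'
      · exact Or.inl (by rwa [union_insert])
      · exact Or.inr ⟨m, mem_insert_self m T,
          h'.mono (insert_subset_insert _ subset_union_left)⟩
    · exact Or.inr ⟨m', mem_insert_of_mem hm', hsafe⟩

lemma hasSafeTerm_toDnf {α : PTerm} {C : PClause} (hα : IsSafe F w α) (hC : C ∈ F)
    (hw : α.card + C.card ≤ w) : HasSafeTerm F w α C.toDnf := by
  rcases hα.union_or_exists_insert_neg C.negTerm (by rwa [PClause.card_negTerm])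
    with h | ⟨_, hm, h⟩
  · exact absurd subset_union_right (h.2 C (.ax hC (by omega)))
  · obtain ⟨m, hmC, rfl⟩ := mem_image.mp hm
    refine ⟨{m}, mem_image_of_mem _ hmC, ?_⟩
    rwa [union_singleton, ← PLit.neg_neg m]

lemma hasSafeTerm_axiom {α T : PTerm} (hα : IsSafe F w α) (hw : α.card + T.card ≤ w) :
    HasSafeTerm F w α (insert T T.negLits) := by
  rcases hα.union_or_exists_insert_neg T hw with h | ⟨m, hm, h⟩
  · exact ⟨T, mem_insert_self _ _, h⟩
  · exact ⟨{m.neg}, mem_insert_of_mem (mem_image_of_mem _ hm), by rwa [union_singleton]⟩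

lemma hasSafeTerm_cut_of_left {α T : PTerm} {A B : PDnf}
    (h₂ : HasSafeTerm F w α (B ∪ T.negLits))
    (h₁ : ∀ m ∈ T, IsSafe F w (insert m.neg α) → HasSafeTerm F w (insert m.neg α) (insert T A)) :
    HasSafeTerm F w α (A ∪ B) := by
  obtain ⟨T₂, hT₂, hs₂⟩ := h₂
  rcases mem_union.mp hT₂ with hB | hneg
  · exact ⟨T₂, mem_union_right _ hB, hs₂⟩
  obtain ⟨m, hm, rfl⟩ := mem_image.mp hneg
  rw [union_singleton] at hs₂
  obtain ⟨T₁, hT₁, hs₁⟩ := h₁ m hm hs₂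
  rcases mem_insert.mp hT₁ with rfl | hA
  · exact absurd (mem_union_left _ (mem_insert_self _ _))
      (hs₁.neg_notMem (mem_union_right _ hm))
  · exact ⟨T₁, mem_union_left _ hA, hs₁.mono (union_subset_union (subset_insert _ _) subset_rfl)⟩

lemma hasSafeTerm_cut_of_right {α T : PTerm} {A B : PDnf}
    (h₁ : HasSafeTerm F w α (insert T A))
    (h₂ : IsSafe F w (α ∪ T) → HasSafeTerm F w (α ∪ T) (B ∪ T.negLits)) :
    HasSafeTerm F w α (A ∪ B) := by
  obtain ⟨T₁, hT₁, hs₁⟩ := h₁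
  rcases mem_insert.mp hT₁ with rfl | hA
  · obtain ⟨T₂, hT₂, hs₂⟩ := h₂ hs₁
    rcases mem_union.mp hT₂ with hB | hneg
    · exact ⟨T₂, mem_union_right _ hB, hs₂.mono (union_subset_union subset_union_left subset_rfl)⟩
    · obtain ⟨m, hm, rfl⟩ := mem_image.mp hneg
      exact absurd (mem_union_right _ (mem_singleton_self _))
        (hs₂.neg_notMem (mem_union_left _ (mem_union_right _ hm)))
  · exact ⟨T₁, mem_union_left _ hA, hs₁⟩

/-- Descending first into the subtree of a cut with fewer leaves adds at most `l` literals to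
`α` and halves the bound on the leaves; this is where the term `l * b` comes from. -/
theorem hasSafeTerm_concl {k l : ℕ} (hF : ∀ C ∈ F, C.card ≤ k) (u : PTree) :
    ∀ {b : ℕ} {α : PTerm}, u.valid F.toHyps l → u.leaves ≤ 2 ^ b → IsSafe F w α →
      α.card + l * b + max k l ≤ w → HasSafeTerm F w α u.concl := by
  have hk := le_max_left k l
  have hl := le_max_right k l
  induction u with
  | leaf D =>
    rintro b α ⟨hok, hlab⟩ - hα hw
    rcases hok with hD | ⟨T, -, rfl⟩
    · obtain ⟨C, hC, rfl⟩ := mem_image.mp hD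
      have := hF C hC
      exact hasSafeTerm_toDnf hα hC (by omega)
    · have : T.card ≤ l := hlab _ (List.mem_singleton_self _) T (mem_insert_self _ _)
      exact hasSafeTerm_axiom hα (by omega)
  | node D t₁ t₂ ih₁ ih₂ =>
    intro b α hv hlv hα hw
    obtain ⟨T, A, B, -, he₁, he₂, rfl⟩ := hv.1.2.2
    have hT : T.card ≤ l := hv.left.2 _ t₁.concl_mem_labels T (he₁ ▸ mem_insert_self _ _)
    have h₁ := t₁.one_le_leaves
    have h₂ := t₂.one_le_leaves
    simp only [PTree.leaves] at hlv
    obtain ⟨n, rfl⟩ : ∃ n, b = n + 1 :=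
      Nat.exists_eq_succ_of_ne_zero (by rintro rfl; simp at hlv; omega)
    rw [pow_succ] at hlv
    have hw' : ∀ β : PTerm, β.card ≤ α.card + T.card → β.card + l * n + max k l ≤ w := by
      intro β hβ
      rw [Nat.mul_succ] at hw
      omega
    rcases le_total t₁.leaves t₂.leaves with hsmall | hsmall
    · refine hasSafeTerm_cut_of_left (he₂ ▸ ih₂ hv.right (by omega) hα hw) fun m hm hs => ?_
      have : 0 < T.card := card_pos.mpr ⟨m, hm⟩
      exact he₁ ▸ ih₁ hv.left (by omega) hs (hw' _ ((card_insert_le _ _).trans (by omega)))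
    · refine hasSafeTerm_cut_of_right (he₁ ▸ ih₁ hv.left (by omega) hα hw) fun hs => ?_
      exact he₂ ▸ ih₂ hv.right (by omega) hs (hw' _ (card_union_le _ _))

end Safe

/-- If a `k`-CNF `F` has a tree-like Res(l) refutation with `L` leaves,
then `F` has a resolution refutation of width at most `l·⌈log₂ L⌉ + max k l`. -/
theorem narrow_res_of_tree_res
    (k l L : ℕ) (F : PCnf) (hF : ∀ C ∈ F, C.card ≤ k)
    (t : PTree) (ht : TreeResRefutation F l t) (hL : t.leaves = L) :
    ∃ π : List PClause, ResDerivOf F ∅ π ∧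
      ∀ C ∈ π, C.card ≤ l * Nat.clog 2 L + max k l := by
  by_cases hder : DerivableInWidth F (l * Nat.clog 2 L + max k l) ∅
  · exact hder.exists_resDerivOf
  · obtain ⟨T, hT, -⟩ := hasSafeTerm_concl hF t (b := Nat.clog 2 L) ht.1
      (hL ▸ Nat.le_pow_clog one_lt_two _)
      (isSafe_empty hder) (by simp)
    simp [ht.2] at hT
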